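/- Let f be a nonnegative measurable function on a ball B in R^n and suppose there exist constants θ ∈ (0,1) and M ≥ 0 such that for every ball B' ⊂ B, the mean of f over B' is at most θ times the essential supremum of f over B' plus M. Then the essential supremum of f over B is at most M/(1-θ), provided f is essentially bounded on B. -/

import Mathlib

/-! By Lebesgue's differentiation theorem, at almost every point of `B` the value of `f` is the
limit of its means over small balls inside `B`, each of which is at most `θ C + M`, where
`C = ‖f‖_{L^∞(B)}`. Hence `C ≤ θ C + M`, and since `C` is finite it can be absorbed. -/

open MeasureTheory Metric Filter Topology

section LebesgueDifferentiation

variable {E : Type*} [NormedAddCommGroup E] [NormedSpace ℝ E] [FiniteDimensional ℝ E]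
  [MeasurableSpace E] [BorelSpace E] {μ : Measure E} [μ.IsAddHaarMeasure]

theorem addHaar_closedBall_ae_eq_ball (x : E) {r : ℝ} (hr : r ≠ 0) :
    closedBall x r =ᵐ[μ] ball x r := by
  refine ae_eq_set.mpr ⟨?_, ?_⟩
  · rw [closedBall_sdiff_ball]
    exact Measure.addHaar_sphere_of_ne_zero μ x hr
  · simp [Set.sdiff_eq_empty.mpr ball_subset_closedBall]

theorem ae_tendsto_setAverage_ball {U : Set E} (hU : IsOpen U) {f : E → ℝ}
    (hf : IntegrableOn f U μ) :
    ∀ᵐ x ∂μ.restrict U, Tendsto (fun r => ⨍ y in ball x r, f y ∂μ) (𝓝[>] 0) (𝓝 (f x)) := by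
  have hg : LocallyIntegrable (U.indicator f) μ :=
    (hf.integrable_indicator hU.measurableSet).locallyIntegrable
  filter_upwards [ae_restrict_of_ae (IsUnifLocDoublingMeasure.ae_tendsto_average μ hg 1),
    ae_restrict_mem hU.measurableSet] with x hx hxU
  have hclosed : Tendsto (fun r => ⨍ y in closedBall x r, U.indicator f y ∂μ) (𝓝[>] 0)
      (𝓝 (f x)) := by
    rw [← Set.indicator_of_mem hxU f]
    refine hx (fun _ => x) id tendsto_id ?_
    filter_upwards [self_mem_nhdsWithin] with r hr
    exact mem_closedBall_self (le_of_lt (by simpa using hr))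
  obtain ⟨ε, hε, hεU⟩ := isOpen_iff.mp hU x hxU
  refine hclosed.congr' ?_
  filter_upwards [Ioo_mem_nhdsGT hε] with r ⟨hr, hrε⟩
  have hsub : closedBall x r ⊆ U := (closedBall_subset_ball hrε).trans hεU
  calc ⨍ y in closedBall x r, U.indicator f y ∂μ = ⨍ y in closedBall x r, f y ∂μ :=
        setAverage_congr_fun measurableSet_closedBall
          (ae_of_all _ fun y hy => Set.indicator_of_mem (hsub hy) f)
    _ = ⨍ y in ball x r, f y ∂μ := setAverage_congr (addHaar_closedBall_ae_eq_ball x hr.ne')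

theorem ae_restrict_le_of_forall_setAverage_ball_le {U : Set E} (hU : IsOpen U) {f : E → ℝ}
    (hf : IntegrableOn f U μ) {c : ℝ}
    (h : ∀ x r, 0 < r → ball x r ⊆ U → ⨍ y in ball x r, f y ∂μ ≤ c) :
    ∀ᵐ x ∂μ.restrict U, f x ≤ c := by
  filter_upwards [ae_tendsto_setAverage_ball hU hf, ae_restrict_mem hU.measurableSet]
    with x hx hxU
  obtain ⟨ε, hε, hεU⟩ := isOpen_iff.mp hU x hxU
  refine le_of_tendsto hx ?_
  filter_upwards [Ioo_mem_nhdsGT hε] with r ⟨hr, hrε⟩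
  exact h x r hr ((ball_subset_ball hrε.le).trans hεU)

end LebesgueDifferentiation

theorem essSup_le_of_mean_bound_general (n : ℕ) (x₀ : EuclideanSpace ℝ (Fin n)) (R : ℝ)
    (f : EuclideanSpace ℝ (Fin n) → ℝ)
    (hnonneg : ∀ x, 0 ≤ f x) (θ M : ℝ) (hθ : θ ∈ Set.Ioo (0:ℝ) 1) (hM : 0 ≤ M)
    (hbdd : MemLp f ⊤ (volume.restrict (ball x₀ R)))
    (h : ∀ (x : EuclideanSpace ℝ (Fin n)) (r : ℝ), 0 < r → ball x r ⊆ ball x₀ R →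
      ⨍ y in ball x r, f y ∂volume ≤
        θ * (eLpNormEssSup f (volume.restrict (ball x r))).toReal + M) :
    (eLpNormEssSup f (volume.restrict (ball x₀ R))).toReal ≤ M / (1 - θ) := by
  obtain ⟨hθ0, hθ1⟩ := hθ
  set C := (eLpNormEssSup f (volume.restrict (ball x₀ R))).toReal
  have hC : eLpNormEssSup f (volume.restrict (ball x₀ R)) ≠ ⊤ := by
    simpa [eLpNorm_exponent_top] using hbdd.eLpNorm_ne_top
  have hint : IntegrableOn f (ball x₀ R) := by
    have : Fact (volume (ball x₀ R) < ⊤) := ⟨measure_ball_lt_top⟩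
    exact hbdd.integrable le_top
  have hbound : ∀ᵐ x ∂volume.restrict (ball x₀ R), f x ≤ θ * C + M := by
    refine ae_restrict_le_of_forall_setAverage_ball_le isOpen_ball hint fun x r hr hsub => ?_
    have hmono : (eLpNormEssSup f (volume.restrict (ball x r))).toReal ≤ C :=
      ENNReal.toReal_mono hC <| eLpNormEssSup_mono_measure f <|
        Measure.absolutelyContinuous_of_le (Measure.restrict_mono hsub le_rfl)
    exact (h x r hr hsub).trans (by gcongr)
  have hCle : C ≤ θ * C + M :=
    ENNReal.toReal_le_of_le_ofReal (by positivity) <| eLpNormEssSup_le_of_ae_bound <|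
      hbound.mono fun x hx => by rwa [Real.norm_of_nonneg (hnonneg x)]
  rw [le_div_iff₀ (by linarith)]
  linarith

theorem essSup_le_of_mean_bound (n : ℕ) (x₀ : EuclideanSpace ℝ (Fin n)) (R : ℝ)
    (hR : 0 < R) (f : EuclideanSpace ℝ (Fin n) → ℝ) (hmeas : Measurable f)
    (hnonneg : ∀ x, 0 ≤ f x) (θ M : ℝ) (hθ : θ ∈ Set.Ioo (0:ℝ) 1) (hM : 0 ≤ M)
    (hbdd : MemLp f ⊤ (volume.restrict (ball x₀ R)))
    (h : ∀ (x : EuclideanSpace ℝ (Fin n)) (r : ℝ), 0 < r → ball x r ⊆ ball x₀ R →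
      ⨍ y in ball x r, f y ∂volume ≤
        θ * (eLpNormEssSup f (volume.restrict (ball x r))).toReal + M) :
    (eLpNormEssSup f (volume.restrict (ball x₀ R))).toReal ≤ M / (1 - θ) :=
  essSup_le_of_mean_bound_general n x₀ R f hnonneg θ M hθ hM hbdd h
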